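/- Define σ_n = e^{−iδ} for n ≤ −1 and σ_n = e^{iδ} for n ≥ 0. Let f = (f_n)_{n∈ℤ₀} ∈ l₀² and let y = (y_n)_{n∈ℤ} be such that its restriction to ℤ₀ lies in l₀², (q_n y_n)_{n∈ℤ₀} ∈ l₀², −Δ²y_{n−1} + q_n y_n = f_n for all n ∈ ℤ₀, and y_{−1} = y₁, Δy_{−1} = e^{2iδ} Δy₁. Then the energy identity holds: (cos δ) ∑_{n∈ℤ₀} (|Δy_n|² + q_n |y_n|²) = Re ∑_{n∈ℤ₀} σ_n f_n conj(y_n). -/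

import Mathlib

/-!
Multiplying the equation by `conj (y n)` and summing by parts, on each half-line of ℤ₀ the sum of
`f n * conj (y n)` is the energy `∑ (‖Δy n‖² + q n ‖y n‖²)` plus the boundary value of the flux
`(y n - y (n - 1)) * conj (y n)`, which vanishes at infinity because `y ∈ l²`: one gets `+ flux 2`
on `n ≥ 2` and `- flux 0` on `n ≤ -1`. After weighting the half-lines by `e^{iδ}` and `e^{-iδ}`,
the impulse conditions turn the combined boundary term into `2 i sin δ ‖y 2 - y 1‖²`, which is
purely imaginary, so the real part is `cos δ` times the energy.
-/

open Filter Topology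

open ComplexConjugate

/-- The index set ℤ₀ = ℤ \ {0,1} as a subtype. -/
abbrev Z0 := {n : ℤ // n ≠ 0 ∧ n ≠ 1}

noncomputable def e2 (δ : ℝ) : ℂ := Complex.exp (2 * (δ : ℂ) * Complex.I)

/-- Extension of y : ℤ → ℂ by the auxiliary values y₁ = y_{−1} and
y₀ = (1 − e^{2iδ}) y_{−1} + e^{2iδ} y₂ coming from the impulse conditions. -/
noncomputable def ext (δ : ℝ) (y : ℤ → ℂ) : ℤ → ℂ := fun n =>
  if n = 0 then (1 - e2 δ) * y (-1) + e2 δ * y 2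
  else if n = 1 then y (-1)
  else y n

/-- (Ly)_n = −Δ²y_{n−1} + q_n y_n for n ∈ ℤ₀, using the auxiliary values. -/
noncomputable def Lop (δ : ℝ) (q : ℤ → ℝ) (y : ℤ → ℂ) (n : ℤ) : ℂ :=
  -(ext δ y (n + 1) - 2 * ext δ y n + ext δ y (n - 1)) + (q n : ℂ) * y n

/-- Membership in the domain D = { y ∈ l₀² : (qₙ yₙ) ∈ l₀² }. -/
def MemD (q : ℤ → ℝ) (y : ℤ → ℂ) : Prop :=
  Summable (fun n : Z0 => ‖y (n : ℤ)‖ ^ 2) ∧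
  Summable (fun n : Z0 => ‖(q (n : ℤ) : ℂ) * y (n : ℤ)‖ ^ 2)


/-- σ_n = e^{−iδ} for n ≤ −1 and σ_n = e^{iδ} for n ≥ 0. -/
noncomputable def sigma (δ : ℝ) (n : ℤ) : ℂ :=
  if n ≤ -1 then Complex.exp (-(δ : ℂ) * Complex.I) else Complex.exp ((δ : ℂ) * Complex.I)

open Function Complex

def natSumNatEquivZ0 : ℕ ⊕ ℕ ≃ Z0 where
  toFun
    | .inl k => ⟨k + 2, by omega, by omega⟩
    | .inr k => ⟨-(k + 1), by omega, by omega⟩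
  invFun n := if 2 ≤ n.1 then .inl (n.1 - 2).toNat else .inr (-n.1 - 1).toNat
  left_inv := by rintro (k | k) <;> simp; omega
  right_inv := by
    rintro ⟨n, h0, h1⟩
    by_cases h : 2 ≤ n <;> simp only [h, if_true, if_false] <;> ext <;> simp <;> omega

theorem hasSum_Z0 {M : Type*} [AddCommMonoid M] [TopologicalSpace M] [ContinuousAdd M]
    {F : ℤ → M} {a b : M} (hpos : HasSum (fun k : ℕ => F (k + 2)) a)
    (hneg : HasSum (fun k : ℕ => F (-(k + 1))) b) : HasSum (fun n : Z0 => F n) (a + b) :=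
  natSumNatEquivZ0.hasSum_iff.mp (hpos.sum hneg)

theorem summable_of_summable_Z0 {G : Type*} [AddCommGroup G] [TopologicalSpace G]
    [IsTopologicalAddGroup G] {F : ℤ → G} (h : Summable fun n : Z0 => F n) : Summable F :=
  (Finset.summable_compl_iff {0, 1}).mp <|
    (Equiv.subtypeEquivRight fun n => by simp).summable_iff.mpr h

theorem summable_norm_mul_norm {ι E F : Type*} [SeminormedAddCommGroup E]
    [SeminormedAddCommGroup F] {a : ι → E} {b : ι → F} (ha : Summable fun i => ‖a i‖ ^ 2)
    (hb : Summable fun i => ‖b i‖ ^ 2) : Summable fun i => ‖a i‖ * ‖b i‖ :=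
  .of_nonneg_of_le (fun i => by positivity)
    (fun i => by nlinarith [sq_nonneg (‖a i‖ - ‖b i‖)]) ((ha.add hb).mul_left (1 / 2))

theorem summable_norm_sub_sq {ι E : Type*} [SeminormedAddCommGroup E] {a b : ι → E}
    (ha : Summable fun i => ‖a i‖ ^ 2) (hb : Summable fun i => ‖b i‖ ^ 2) :
    Summable fun i => ‖a i - b i‖ ^ 2 :=
  .of_nonneg_of_le (fun i => by positivity)
    (fun i => by
      nlinarith [norm_sub_le (a i) (b i), norm_nonneg (a i - b i), sq_nonneg (‖a i‖ - ‖b i‖)])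
    ((ha.mul_left 2).add (hb.mul_left 2))

theorem tendsto_zero_of_summable_norm_sq {ι E : Type*} [SeminormedAddCommGroup E] {a : ι → E}
    (h : Summable fun i => ‖a i‖ ^ 2) : Tendsto a cofinite (𝓝 0) := by
  rw [tendsto_zero_iff_norm_tendsto_zero]
  simpa [Real.sqrt_sq (norm_nonneg _)] using h.tendsto_cofinite_zero.sqrt

theorem Filter.Tendsto.comp_injective_nat {α β : Type*} {φ : ℕ → α} {g : α → β} {l : Filter β}
    (h : Tendsto g cofinite l) (hφ : Injective φ) : Tendsto (g ∘ φ) atTop l :=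
  Nat.cofinite_eq_atTop ▸ h.comp hφ.tendsto_cofinite

theorem natCast_add_two_injective : Injective fun k : ℕ => (k : ℤ) + 2 :=
  fun a b h => by simpa using h

theorem neg_natCast_add_one_injective : Injective fun k : ℕ => -((k : ℤ) + 1) :=
  fun a b h => by simpa using h

theorem hasSum_of_eq_add_sub_succ {G : Type*} [AddCommGroup G] [TopologicalSpace G]
    [IsTopologicalAddGroup G] [T2Space G] {s e u : ℕ → G} {a : G} (hs : Summable s)
    (he : HasSum e a) (hu : Tendsto u atTop (𝓝 0)) (h : ∀ k, s k = e k + (u k - u (k + 1))) :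
    HasSum s (a + u 0) := by
  have hd : Summable fun k => u k - u (k + 1) :=
    (hs.sub he.summable).congr fun k => by rw [h]; abel
  have htel : HasSum (fun k => u k - u (k + 1)) (u 0) := by
    rw [hd.hasSum_iff_tendsto_nat]
    simp_rw [Finset.sum_range_sub']
    simpa using tendsto_const_nhds.sub hu
  exact (he.add htel).congr_fun h

noncomputable def flux (y : ℤ → ℂ) (n : ℤ) : ℂ := (y n - y (n - 1)) * conj (y n)

noncomputable def energyDensity (q : ℤ → ℝ) (y : ℤ → ℂ) (n : ℤ) : ℝ :=
  ‖y (n + 1) - y n‖ ^ 2 + q n * ‖y n‖ ^ 2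

theorem mul_conj_eq_energyDensity_add_flux_sub_flux (q : ℤ → ℝ) (y : ℤ → ℂ) (n : ℤ) :
    (-(y (n + 1) - 2 * y n + y (n - 1)) + (q n : ℂ) * y n) * conj (y n) =
      energyDensity q y n + (flux y n - flux y (n + 1)) := by
  simp only [energyDensity, flux, add_sub_cancel_right]
  push_cast
  rw [← mul_conj' (y n), ← mul_conj' (y (n + 1) - y n), map_sub]
  ring

theorem tendsto_flux_cofinite {y : ℤ → ℂ} (hy : Tendsto y cofinite (𝓝 0)) :
    Tendsto (flux y) cofinite (𝓝 0) := by
  have hshift : Tendsto (fun n => y (n - 1)) cofinite (𝓝 0) :=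
    hy.comp (sub_left_injective (b := 1)).tendsto_cofinite
  have h := (hy.sub hshift).mul hy.star
  rwa [sub_zero, star_zero, mul_zero] at h

theorem summable_energyDensity {q : ℤ → ℝ} {y : ℤ → ℂ} (hy : Summable fun n => ‖y n‖ ^ 2)
    (hqy : Summable fun n => ‖(q n : ℂ) * y n‖ ^ 2) : Summable (energyDensity q y) := by
  refine (summable_norm_sub_sq (hy.comp_injective (add_left_injective 1)) hy).add ?_
  refine .of_norm_bounded (summable_norm_mul_norm hqy hy) fun n => ?_
  simp [norm_mul, sq, mul_assoc]

theorem hasSum_mul_conj_add_two {q : ℤ → ℝ} {f y : ℤ → ℂ}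
    (hS : Summable fun n => f n * conj (y n)) (hE : Summable (energyDensity q y))
    (hflux : Tendsto (flux y) cofinite (𝓝 0))
    (heq : ∀ n : ℤ, n ≠ 0 → n ≠ 1 →
      -(y (n + 1) - 2 * y n + y (n - 1)) + (q n : ℂ) * y n = f n) :
    HasSum (fun k : ℕ => f (k + 2) * conj (y (k + 2)))
      ((∑' k : ℕ, energyDensity q y (k + 2) : ℝ) + flux y 2) := by
  refine hasSum_of_eq_add_sub_succ (hS.comp_injective natCast_add_two_injective)
    (hasSum_ofReal.mpr (hE.comp_injective natCast_add_two_injective).hasSum)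
    (hflux.comp_injective_nat natCast_add_two_injective) fun k => ?_
  rw [comp_apply, ← heq _ (by omega) (by omega), mul_conj_eq_energyDensity_add_flux_sub_flux]
  simp only [comp_apply, Nat.cast_succ, add_right_comm]

theorem hasSum_mul_conj_neg_add_one {q : ℤ → ℝ} {f y : ℤ → ℂ}
    (hS : Summable fun n => f n * conj (y n)) (hE : Summable (energyDensity q y))
    (hflux : Tendsto (flux y) cofinite (𝓝 0))
    (heq : ∀ n : ℤ, n ≠ 0 → n ≠ 1 →
      -(y (n + 1) - 2 * y n + y (n - 1)) + (q n : ℂ) * y n = f n) :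
    HasSum (fun k : ℕ => f (-(k + 1)) * conj (y (-(k + 1))))
      ((∑' k : ℕ, energyDensity q y (-(k + 1)) : ℝ) - flux y 0) := by
  have hneg : Injective fun k : ℕ => -(k : ℤ) := neg_injective.comp Nat.cast_injective
  have := hasSum_of_eq_add_sub_succ (u := fun k => -flux y (-k))
    (hS.comp_injective neg_natCast_add_one_injective)
    (hasSum_ofReal.mpr (hE.comp_injective neg_natCast_add_one_injective).hasSum)
    (by simpa using (hflux.comp_injective_nat hneg).neg) fun k => ?_
  · rwa [Nat.cast_zero, neg_zero, ← sub_eq_add_neg] at this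
  rw [comp_apply, ← heq _ (by omega) (by omega), mul_conj_eq_energyDensity_add_flux_sub_flux]
  simp only [comp_apply, Nat.cast_succ, show -((k : ℤ) + 1) + 1 = -k by ring]
  ring

theorem hasSum_sigma_mul_Z0 {δ : ℝ} {g : ℤ → ℂ} {a b : ℂ}
    (hpos : HasSum (fun k : ℕ => g (k + 2)) a) (hneg : HasSum (fun k : ℕ => g (-(k + 1))) b) :
    HasSum (fun n : Z0 => sigma δ n * g n) (exp (δ * I) * a + exp (-δ * I) * b) :=
  hasSum_Z0 (F := fun n => sigma δ n * g n)
    ((hpos.mul_left _).congr_fun fun k => by rw [sigma, if_neg (by omega)])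
    ((hneg.mul_left _).congr_fun fun k => by rw [sigma, if_pos (by omega)])

theorem exp_mul_flux_two_sub_exp_neg_mul_flux_zero {δ : ℝ} {y : ℤ → ℂ}
    (himp1 : y (-1) = y 1) (himp2 : y 0 - y (-1) = e2 δ * (y 2 - y 1)) :
    exp (δ * I) * flux y 2 - exp (-δ * I) * flux y 0 =
      2 * I * (Real.sin δ * ‖y 2 - y 1‖ ^ 2 : ℝ) := by
  have hNP : exp (-δ * I) * exp (δ * I) = 1 := by rw [← exp_add]; simp
  have hconj : conj (exp (δ * I)) = exp (-δ * I) := by rw [← exp_conj]; simp [neg_mul]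
  have he2 : e2 δ = exp (δ * I) * exp (δ * I) := by rw [e2, ← exp_add]; ring_nf
  have hsub : exp (δ * I) - exp (-δ * I) = 2 * I * Real.sin δ := by
    rw [← ofReal_neg, exp_mul_I, exp_mul_I, ← ofReal_cos, ← ofReal_cos, ← ofReal_sin,
      ← ofReal_sin, Real.cos_neg, Real.sin_neg]
    push_cast
    ring
  have hy0 : y 0 = y 1 + e2 δ * (y 2 - y 1) := by linear_combination himp2 + himp1
  simp only [flux, show (2 : ℤ) - 1 = 1 by norm_num, show (0 : ℤ) - 1 = -1 by norm_num, himp1,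
    hy0, he2, map_add, map_mul, map_sub, hconj]
  rw [ofReal_mul, ofReal_pow, ← mul_conj' (y 2 - y 1), map_sub]
  linear_combination (-exp (δ * I) * (y 2 - y 1) * conj (y 1) -
    exp (-δ * I) * (y 2 - y 1) * (conj (y 2) - conj (y 1)) * (exp (-δ * I) * exp (δ * I) + 1)) *
      hNP + (y 2 - y 1) * (conj (y 2) - conj (y 1)) * hsub

theorem re_exp_mul_add_flux_add_exp_neg_mul_sub_flux {δ A B : ℝ} {y : ℤ → ℂ}
    (himp1 : y (-1) = y 1) (himp2 : y 0 - y (-1) = e2 δ * (y 2 - y 1)) :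
    (exp (δ * I) * (A + flux y 2) + exp (-δ * I) * (B - flux y 0)).re = Real.cos δ * (A + B) := by
  rw [show exp (δ * I) * (A + flux y 2) + exp (-δ * I) * (B - flux y 0) =
      exp (δ * I) * A + exp (-δ * I) * B + (exp (δ * I) * flux y 2 - exp (-δ * I) * flux y 0) by
    ring, exp_mul_flux_two_sub_exp_neg_mul_flux_zero himp1 himp2, ← ofReal_neg]
  simp only [add_re, re_mul_ofReal, exp_ofReal_mul_I_re, Real.cos_neg]
  simp
  ring

theorem energy_identity_general (δ : ℝ) (q : ℤ → ℝ) (f y : ℤ → ℂ)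
    (hf : Summable (fun n : Z0 => ‖f (n : ℤ)‖ ^ 2))
    (hyl2 : Summable (fun n : Z0 => ‖y (n : ℤ)‖ ^ 2))
    (hqy : Summable (fun n : Z0 => ‖(q (n : ℤ) : ℂ) * y (n : ℤ)‖ ^ 2))
    (heq : ∀ n : ℤ, n ≠ 0 → n ≠ 1 →
      -(y (n + 1) - 2 * y n + y (n - 1)) + (q n : ℂ) * y n = f n)
    (himp1 : y (-1) = y 1)
    (himp2 : y 0 - y (-1) = e2 δ * (y 2 - y 1)) :
    Summable (fun n : Z0 =>
      ‖y ((n : ℤ) + 1) - y (n : ℤ)‖ ^ 2 + q (n : ℤ) * ‖y (n : ℤ)‖ ^ 2) ∧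
    Real.cos δ *
        (∑' n : Z0, (‖y ((n : ℤ) + 1) - y (n : ℤ)‖ ^ 2 + q (n : ℤ) * ‖y (n : ℤ)‖ ^ 2)) =
      (∑' n : Z0, sigma δ (n : ℤ) * f (n : ℤ) * conj (y (n : ℤ))).re := by
  change Summable (fun n : Z0 => energyDensity q y n) ∧
    Real.cos δ * ∑' n : Z0, energyDensity q y n = _
  have hy := summable_of_summable_Z0 (F := fun n => ‖y n‖ ^ 2) hyl2
  have hE := summable_energyDensity hy
    (summable_of_summable_Z0 (F := fun n => ‖(q n : ℂ) * y n‖ ^ 2) hqy)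
  have hS : Summable fun n => f n * conj (y n) := .of_norm <|
    (summable_norm_mul_norm (summable_of_summable_Z0 (F := fun n => ‖f n‖ ^ 2) hf) hy).congr
      fun n => by simp
  have hflux := tendsto_flux_cofinite (tendsto_zero_of_summable_norm_sq hy)
  have hEZ0 := hasSum_Z0 (F := energyDensity q y)
    (hE.comp_injective natCast_add_two_injective).hasSum
    (hE.comp_injective neg_natCast_add_one_injective).hasSum
  have hσ := (hasSum_sigma_mul_Z0 (δ := δ) (g := fun n => f n * conj (y n))
    (hasSum_mul_conj_add_two hS hE hflux heq)
    (hasSum_mul_conj_neg_add_one hS hE hflux heq)).congr_fun fun n => mul_assoc _ _ _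
  refine ⟨hEZ0.summable, ?_⟩
  rw [hEZ0.tsum_eq, hσ.tsum_eq]
  exact (re_exp_mul_add_flux_add_exp_neg_mul_sub_flux himp1 himp2).symm

/-- the energy identity
(cos δ) ∑_{n∈ℤ₀} (|Δy_n|² + q_n |y_n|²) = Re ∑_{n∈ℤ₀} σ_n f_n conj(y_n)
for a solution y ∈ D of Ly = f with the impulse conditions, f ∈ l₀². -/
theorem energy_identity (δ : ℝ) (hδ : 0 ≤ δ ∧ δ < Real.pi / 2)
    (q : ℤ → ℝ) (c : ℝ) (hc : 0 < c) (hq : ∀ n : ℤ, n ≠ 0 → n ≠ 1 → c ≤ q n)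
    (f y : ℤ → ℂ)
    (hf : Summable (fun n : Z0 => ‖f (n : ℤ)‖ ^ 2))
    (hyl2 : Summable (fun n : Z0 => ‖y (n : ℤ)‖ ^ 2))
    (hqy : Summable (fun n : Z0 => ‖(q (n : ℤ) : ℂ) * y (n : ℤ)‖ ^ 2))
    (heq : ∀ n : ℤ, n ≠ 0 → n ≠ 1 →
      -(y (n + 1) - 2 * y n + y (n - 1)) + (q n : ℂ) * y n = f n)
    (himp1 : y (-1) = y 1)
    (himp2 : y 0 - y (-1) = e2 δ * (y 2 - y 1)) :
    Summable (fun n : Z0 =>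
      ‖y ((n : ℤ) + 1) - y (n : ℤ)‖ ^ 2 + q (n : ℤ) * ‖y (n : ℤ)‖ ^ 2) ∧
    Real.cos δ *
        (∑' n : Z0, (‖y ((n : ℤ) + 1) - y (n : ℤ)‖ ^ 2 + q (n : ℤ) * ‖y (n : ℤ)‖ ^ 2)) =
      (∑' n : Z0, sigma δ (n : ℤ) * f (n : ℤ) * conj (y (n : ℤ))).re :=
  energy_identity_general δ q f y hf hyl2 hqy heq himp1 himp2
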